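/- (Sonine formula) For real p > 0, k > −1, and x ∈ ℝ, ∫_0^∞ J_k(xt) e^{−pt²} t^{k+1} dt = x^k e^{−x²/(4p)} / (2p)^{k+1}, where J_k is the Bessel function of the first kind of order k. -/

import Mathlib

/-!
Expand `J_k(zt)` in its power series and integrate term by term. For `t > 0` the `m`-th term of
the integrand is a complex constant times the positive function `t^(2m+2k+1) e^(-pt²)`, whose
integral is the Gaussian moment `Γ(m+k+1) / (2 p^(m+k+1))`. Its Gamma factor cancels the one in
the Bessel coefficient, so the series of integrals is the exponential series
`(z/2)^k / (2 p^(k+1)) · ∑ (-(z/2)²/p)^m / m!`. Positivity makes the integrals of the absolute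
values equal to the norms of these terms, so their summability justifies exchanging sum and
integral.
-/

open MeasureTheory

/-- The Bessel function of the first kind of order `α`, via its power series. -/
noncomputable def besselJ (α : ℝ) (z : ℂ) : ℂ :=
  ∑' m : ℕ, ((-1 : ℂ) ^ m / ((m.factorial : ℂ) * Complex.Gamma (m + α + 1))) *
    (z / 2) ^ (2 * (m : ℂ) + (α : ℂ))

open Set

namespace Complex

lemma mul_ofReal_cpow (z : ℂ) {t : ℝ} (ht : 0 ≤ t) (w : ℂ) :
    (z * t) ^ w = z ^ w * (t : ℂ) ^ w := by
  rcases eq_or_ne w 0 with rfl | hw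
  · simp
  rcases eq_or_ne z 0 with rfl | hz
  · simp [zero_cpow hw]
  rcases ht.eq_or_lt with rfl | ht
  · simp [zero_cpow hw]
  rw [cpow_def_of_ne_zero (mul_ne_zero hz (ofReal_ne_zero.mpr ht.ne')), log_mul_ofReal t ht z hz,
    add_mul, exp_add, ← cpow_def_of_ne_zero hz, ofReal_log ht.le,
    ← cpow_def_of_ne_zero (ofReal_ne_zero.mpr ht.ne'), mul_comm]

/-- The hypothesis excludes `x = 0`, `n ≠ 0`, `n + w = 0`, where `0 ^ (n + w) = 1` but
`0 ^ n * 0 ^ w = 0`. -/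
lemma cpow_natCast_add {w : ℂ} (hw : -1 < w.re) (x : ℂ) (n : ℕ) :
    x ^ ((n : ℂ) + w) = x ^ n * x ^ w := by
  rcases eq_or_ne x 0 with rfl | hx
  · rcases n.eq_zero_or_pos with rfl | hn
    · simp
    have : (n : ℂ) + w ≠ 0 := fun h => by
      have := congrArg re h
      simp only [add_re, natCast_re, zero_re] at this
      have : (1 : ℝ) ≤ n := by exact_mod_cast hn
      linarith
    simp [zero_cpow this, hn.ne']
  · rw [cpow_add _ _ hx, cpow_natCast]

end Complex

lemma hasSum_mul_integral_of_nonneg {ι α : Type*} [Countable ι] [MeasurableSpace α]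
    {μ : Measure α} {c : ι → ℂ} {φ : ι → α → ℝ} (hφ_nonneg : ∀ m, 0 ≤ᵐ[μ] φ m)
    (hφ_int : ∀ m, Integrable (φ m) μ)
    (hsum : Summable fun m => ‖c m * ∫ a, φ m a ∂μ‖) :
    HasSum (fun m => c m * ∫ a, φ m a ∂μ) (∫ a, ∑' m, c m * φ m a ∂μ) := by
  have hnorm (m : ι) : ∫ a, ‖c m * φ m a‖ ∂μ = ‖c m * ∫ a, φ m a ∂μ‖ := by
    rw [norm_mul, Complex.norm_real, Real.norm_of_nonneg (integral_nonneg_of_ae (hφ_nonneg m)),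
      ← integral_const_mul]
    refine integral_congr_ae ((hφ_nonneg m).mono fun a ha => ?_)
    simp [Complex.norm_real, Real.norm_of_nonneg ha]
  have := hasSum_integral_of_summable_integral_norm
    (F := fun m a => c m * (φ m a : ℂ)) (fun m => ((hφ_int m).ofReal).const_mul (c m))
    (by simpa only [hnorm] using hsum)
  simpa only [integral_const_mul, integral_complex_ofReal] using this

open Real in
lemma integral_rpow_mul_exp_neg_mul_sq {b s : ℝ} (hb : 0 < b) (hs : -1 < s) :
    ∫ x in Ioi (0 : ℝ), x ^ s * exp (-b * x ^ 2) =
      b ^ (-(s + 1) / 2) * (1 / 2) * Gamma ((s + 1) / 2) := by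
  simp_rw [← rpow_two]
  exact integral_rpow_mul_exp_neg_mul_rpow two_pos hs hb

noncomputable def besselJTerm (α : ℝ) (z : ℂ) (m : ℕ) : ℂ :=
  ((-1 : ℂ) ^ m / ((m.factorial : ℂ) * Complex.Gamma (m + α + 1))) *
    (z / 2) ^ (2 * (m : ℂ) + (α : ℂ))

lemma besselJ_eq_tsum_besselJTerm (α : ℝ) (z : ℂ) :
    besselJ α z = ∑' m, besselJTerm α z m :=
  rfl

lemma besselJTerm_mul_ofReal (α : ℝ) (z : ℂ) {t : ℝ} (ht : 0 ≤ t) (m : ℕ) :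
    besselJTerm α (z * t) m = besselJTerm α z m * (t : ℂ) ^ (2 * (m : ℂ) + (α : ℂ)) := by
  rw [besselJTerm, besselJTerm, mul_div_right_comm, Complex.mul_ofReal_cpow _ ht, mul_assoc]

lemma besselJTerm_mul_integral {p k : ℝ} (hp : 0 < p) (hk : -1 < k) (z : ℂ) (m : ℕ) :
    besselJTerm k z m *
        ∫ t in Ioi (0 : ℝ), t ^ (2 * (m : ℝ) + 2 * k + 1) * Real.exp (-p * t ^ 2) =
      (z / 2) ^ (k : ℂ) / (2 * p ^ (k + 1) : ℝ) * (-((z / 2) ^ 2 / p)) ^ m / m.factorial := by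
  have hm : (0 : ℝ) ≤ m := m.cast_nonneg
  have hΓ : (Real.Gamma (m + k + 1) : ℂ) ≠ 0 :=
    Complex.ofReal_ne_zero.mpr (Real.Gamma_pos_of_pos (by linarith)).ne'
  rw [integral_rpow_mul_exp_neg_mul_sq hp (by linarith), besselJTerm,
    show (2 * (m : ℝ) + 2 * k + 1 + 1) / 2 = m + k + 1 by ring,
    show -(2 * (m : ℝ) + 2 * k + 1 + 1) / 2 = -m + -(k + 1) by ring,
    Real.rpow_add hp, Real.rpow_neg hp.le, Real.rpow_neg hp.le, Real.rpow_natCast,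
    show 2 * (m : ℂ) + k = ((2 * m : ℕ) : ℂ) + k by push_cast; ring,
    Complex.cpow_natCast_add (by simpa using hk), pow_mul,
    show (m : ℂ) + k + 1 = ((m + k + 1 : ℝ) : ℂ) by push_cast; ring, Complex.Gamma_ofReal]
  have hpk : ((p ^ (k + 1) : ℝ) : ℂ) ≠ 0 :=
    Complex.ofReal_ne_zero.mpr (Real.rpow_pos_of_pos hp _).ne'
  push_cast
  field_simp
  rw [neg_pow (z ^ 2 / (2 ^ 2 * (p : ℂ))), div_pow, div_pow, mul_pow]
  ring

lemma besselJ_mul_ofReal_mul_cexp_mul_cpow (k p : ℝ) (z : ℂ) {t : ℝ} (ht : 0 < t) :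
    besselJ k (z * t) * Complex.exp (-(p : ℂ) * t ^ 2) * (t : ℂ) ^ ((k : ℂ) + 1) =
      ∑' m, besselJTerm k z m *
        ((t ^ (2 * (m : ℝ) + 2 * k + 1) * Real.exp (-p * t ^ 2) : ℝ) : ℂ) := by
  have hpow (m : ℕ) : ((t ^ (2 * (m : ℝ) + 2 * k + 1) * Real.exp (-p * t ^ 2) : ℝ) : ℂ) =
      (t : ℂ) ^ (2 * (m : ℂ) + k) * Complex.exp (-(p : ℂ) * t ^ 2) *
        (t : ℂ) ^ ((k : ℂ) + 1) := by
    rw [show 2 * (m : ℝ) + 2 * k + 1 = (2 * m + k) + (k + 1) by ring, Real.rpow_add ht]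
    push_cast [Complex.ofReal_cpow ht.le]
    ring
  simp only [besselJ_eq_tsum_besselJTerm, ← tsum_mul_right, besselJTerm_mul_ofReal _ _ ht.le,
    hpow, mul_assoc]

lemma cpow_div_two_div_two_mul_rpow (z : ℂ) {p : ℝ} (hp : 0 < p) (k : ℝ) :
    (z / 2) ^ (k : ℂ) / ((2 * p ^ (k + 1) : ℝ) : ℂ) =
      z ^ (k : ℂ) / (2 * (p : ℂ)) ^ ((k : ℂ) + 1) := by
  have h2 : (2 : ℝ) ^ k ≠ 0 := (Real.rpow_pos_of_pos two_pos k).ne'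
  have hpk : p ^ (k + 1) ≠ 0 := (Real.rpow_pos_of_pos hp _).ne'
  rw [show z / 2 = z * ((2⁻¹ : ℝ) : ℂ) by push_cast; ring,
    Complex.mul_ofReal_cpow _ (by norm_num), ← Complex.ofReal_cpow (by norm_num),
    Real.inv_rpow zero_le_two,
    show 2 * (p : ℂ) = ((2 * p : ℝ) : ℂ) by push_cast; ring,
    show (k : ℂ) + 1 = ((k + 1 : ℝ) : ℂ) by push_cast; ring,
    ← Complex.ofReal_cpow (by positivity), Real.mul_rpow zero_le_two hp.le,
    Real.rpow_add_one two_ne_zero]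
  push_cast
  field_simp

theorem integral_besselJ_mul_cexp_neg_mul_sq_mul_cpow {p k : ℝ} (hp : 0 < p) (hk : -1 < k)
    (z : ℂ) :
    ∫ t in Ioi (0 : ℝ),
        besselJ k (z * t) * Complex.exp (-(p : ℂ) * t ^ 2) * (t : ℂ) ^ ((k : ℂ) + 1) =
      z ^ (k : ℂ) * Complex.exp (-z ^ 2 / (4 * p)) / (2 * (p : ℂ)) ^ ((k : ℂ) + 1) := by
  set φ : ℕ → ℝ → ℝ := fun m t => t ^ (2 * (m : ℝ) + 2 * k + 1) * Real.exp (-p * t ^ 2)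
  set C : ℂ := (z / 2) ^ (k : ℂ) / (2 * p ^ (k + 1) : ℝ)
  set w : ℂ := -((z / 2) ^ 2 / p)
  have hterm (m : ℕ) :
      besselJTerm k z m * ∫ t in Ioi (0 : ℝ), φ m t = C * (w ^ m / m.factorial) := by
    rw [besselJTerm_mul_integral hp hk, mul_div_assoc]
  have hseries : HasSum (fun m => besselJTerm k z m * ∫ t in Ioi (0 : ℝ), φ m t)
      (C * Complex.exp w) := by
    simp only [hterm, Complex.exp_eq_exp_ℂ]
    exact (NormedSpace.expSeries_div_hasSum_exp w).mul_left C
  have hsummable : Summable fun m => ‖besselJTerm k z m * ∫ t in Ioi (0 : ℝ), φ m t‖ := by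
    simpa only [hterm, norm_mul] using (NormedSpace.norm_expSeries_div_summable w).mul_left ‖C‖
  have hswap := hasSum_mul_integral_of_nonneg (c := besselJTerm k z) (φ := φ)
    (fun m => (ae_restrict_iff' measurableSet_Ioi).mpr (.of_forall fun t ht =>
      mul_nonneg (Real.rpow_nonneg (le_of_lt ht) _) (Real.exp_pos _).le))
    (fun m => integrableOn_rpow_mul_exp_neg_mul_sq hp (by linarith [m.cast_nonneg (α := ℝ)]))
    hsummable
  rw [setIntegral_congr_fun measurableSet_Ioi
      fun t ht => besselJ_mul_ofReal_mul_cexp_mul_cpow k p z ht,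
    hswap.unique hseries,
    show C = z ^ (k : ℂ) / (2 * (p : ℂ)) ^ ((k : ℂ) + 1) from
      cpow_div_two_div_two_mul_rpow z hp k,
    show w = -z ^ 2 / (4 * p) by simp only [w]; ring]
  ring

/-- Sonine's formula: `∫₀^∞ J_k(xt) e^{-pt²} t^{k+1} dt = x^k e^{-x²/(4p)}/(2p)^{k+1}`. -/
theorem sonine_formula (p k : ℝ) (hp : 0 < p) (hk : -1 < k) (x : ℝ) :
    ∫ t in Set.Ioi (0:ℝ),
        besselJ k ((x : ℂ) * t) * Complex.exp (-(p : ℂ) * t ^ 2) * (t : ℂ) ^ ((k : ℂ) + 1) =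
      (x : ℂ) ^ (k : ℂ) * Complex.exp (-(x : ℂ) ^ 2 / (4 * p)) / (2 * (p : ℂ)) ^ ((k : ℂ) + 1) :=
  integral_besselJ_mul_cexp_neg_mul_sq_mul_cpow hp hk x
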